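/- Let λ be the morphism λ(1)=1234, λ(2)=2143, λ(3)=1243, λ(4)=2134 and L_t = λ^t(1). In L_t (t ≥ 1), no two λ-blocks at distance 2 are equal: for every i with 0 ≤ i ≤ 4^{t-1} - 3, the block L_t(4i+1)...L_t(4i+4) differs from the block L_t(4i+9)...L_t(4i+12). -/

import Mathlib

/-- The 4-uniform morphism `λ` on `{1,2,3,4}`, encoded as `Fin 4` via `0=1, 1=2, 2=3, 3=4`:
`λ(1)=1234, λ(2)=2143, λ(3)=1243, λ(4)=2134`. -/
def lamM : Fin 4 → List (Fin 4) :=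
  ![[0, 1, 2, 3], [1, 0, 3, 2], [0, 1, 3, 2], [1, 0, 2, 3]]

/-- The sequence `L_t = λ^t(1)`. -/
def lamL : ℕ → List (Fin 4)
  | 0 => [0]
  | t + 1 => (lamL t).flatMap lamM

/-!
Every image `λ(a)` starts with two letters of `{1,2}` and ends with two letters of `{3,4}`, so in
`L_{t+1}` the letter at (0-indexed) position `p` lies in `{1,2}` exactly when `p % 4 < 2`.
Positions `i` and `i + 2` of `L_{t-1}` therefore carry letters from different halves, which are
distinct, and their images, the blocks `i` and `i + 2` of `L_t`, differ because `λ` is injective.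
-/

namespace List

variable {α β : Type*} {f : α → List β} {k : ℕ}

theorem take_drop_flatMap_of_length_eq (hf : ∀ a, (f a).length = k) (l : List α) {i : ℕ}
    (hi : i < l.length) : ((l.flatMap f).drop (k * i)).take k = f l[i] := by
  induction l generalizing i with
  | nil => simp at hi
  | cons x xs ih =>
    cases i with
    | zero => simp [← hf x]
    | succ i =>
      rw [flatMap_cons, show k * (i + 1) = (f x).length + k * i by rw [hf]; ring,
        drop_length_add_append]
      exact ih (by simpa using hi)

theorem getElem_flatMap_of_length_eq (hf : ∀ a, (f a).length = k) (l : List α) {i r : ℕ}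
    (hi : i < l.length) (hr : r < k) (h : k * i + r < (l.flatMap f).length) :
    (l.flatMap f)[k * i + r] = (f l[i])[r]'(hf l[i] ▸ hr) := by
  apply Option.some_injective
  rw [← getElem?_eq_getElem, ← getElem?_eq_getElem, ← take_drop_flatMap_of_length_eq hf l hi,
    getElem?_take_of_lt hr, getElem?_drop]

end List

lemma lamM_length (a : Fin 4) : (lamM a).length = 4 := by
  fin_cases a <;> rfl

lemma lamM_injective : Function.Injective lamM := by
  decide

lemma lamM_getElem_lt_two_iff (a : Fin 4) {r : ℕ} (hr : r < (lamM a).length) :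
    (lamM a)[r] < 2 ↔ r < 2 := by
  rw [lamM_length] at hr
  fin_cases a <;> interval_cases r <;> decide +revert

lemma lamL_length (t : ℕ) : (lamL t).length = 4 ^ t := by
  induction t with
  | zero => rfl
  | succ t ih =>
    simp only [lamL, List.length_flatMap, lamM_length, List.map_const', List.sum_replicate,
      smul_eq_mul, ih, pow_succ]

lemma lamL_succ_block (t : ℕ) {i : ℕ} (hi : i < (lamL t).length) :
    ((lamL (t + 1)).drop (4 * i)).take 4 = lamM (lamL t)[i] :=
  List.take_drop_flatMap_of_length_eq lamM_length _ hi

lemma lamL_succ_getElem_lt_two_iff (t : ℕ) {p : ℕ} (hp : p < (lamL (t + 1)).length) :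
    (lamL (t + 1))[p] < 2 ↔ p % 4 < 2 := by
  have hq : p / 4 < (lamL t).length := by
    rw [lamL_length, pow_succ] at hp
    rw [lamL_length]
    omega
  have hp' : 4 * (p / 4) + p % 4 < (lamL (t + 1)).length := by rwa [Nat.div_add_mod]
  have key := List.getElem_flatMap_of_length_eq lamM_length (lamL t) hq (Nat.mod_lt p four_pos) hp'
  simp only [Nat.div_add_mod] at key
  rw [← lamM_getElem_lt_two_iff (lamL t)[p / 4] (by rw [lamM_length]; omega), ← key]
  rfl

theorem lamL_blocks_dist_two_general (t : ℕ) (i : ℕ)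
    (hi : i + 3 ≤ 4 ^ (t - 1)) :
    ((lamL t).drop (4 * i)).take 4 ≠ ((lamL t).drop (4 * i + 8)).take 4 := by
  obtain _ | _ | s := t
  · simp at hi
  · simp at hi
  have hlen := lamL_length (s + 1)
  simp only [Nat.add_sub_cancel] at hi
  rw [lamL_succ_block _ (by omega), show 4 * i + 8 = 4 * (i + 2) by ring,
    lamL_succ_block _ (by omega)]
  refine lamM_injective.ne fun h => ?_
  have hi₀ := lamL_succ_getElem_lt_two_iff s (p := i) (by omega)
  have hi₂ := lamL_succ_getElem_lt_two_iff s (p := i + 2) (by omega)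
  rw [h] at hi₀
  omega

/-- In `L_t` (`t ≥ 1`), no two `λ`-blocks at distance 2 are equal: whenever the blocks at
positions `i` and `i+2` both exist (`i + 3 ≤ 4^(t-1)`), the block
`L_t(4i+1)...L_t(4i+4)` differs from the block `L_t(4i+9)...L_t(4i+12)`. -/
theorem lamL_blocks_dist_two (t : ℕ) (ht : 1 ≤ t) (i : ℕ)
    (hi : i + 3 ≤ 4 ^ (t - 1)) :
    ((lamL t).drop (4 * i)).take 4 ≠ ((lamL t).drop (4 * i + 8)).take 4 :=
  lamL_blocks_dist_two_general t i hi
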